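/- The left coset space U(2)/P, where P ≤ U(2) is the subgroup consisting of all matrices diag(a,b) and all matrices [[0,a],[b,0]] with |a| = |b| = 1, equipped with the quotient topology, is homeomorphic to the real projective plane ℝP² (the quotient of the 2-sphere S² by the antipodal involution). -/

import Mathlib

open Matrix

/-- The subgroup `P ≤ U(2)` of all matrices `diag(a,b)` and `[[0,a],[b,0]]` with
`|a| = |b| = 1`; it is the wreath product `S¹ ≀ C₂`. -/
def wreathP : Subgroup (Matrix.unitaryGroup (Fin 2) ℂ) where
  carrier := {Q | (∃ a b : ℂ, ‖a‖ = 1 ∧ ‖b‖ = 1 ∧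
      (Q : Matrix (Fin 2) (Fin 2) ℂ) = !![a, 0; 0, b]) ∨
    (∃ a b : ℂ, ‖a‖ = 1 ∧ ‖b‖ = 1 ∧
      (Q : Matrix (Fin 2) (Fin 2) ℂ) = !![0, a; b, 0])}
  one_mem' := Or.inl ⟨1, 1, by simp, by simp, by simp [Matrix.one_fin_two]⟩
  mul_mem' := by
    rintro P Q (⟨a, b, ha, hb, hP⟩ | ⟨a, b, ha, hb, hP⟩)
      (⟨a', b', ha', hb', hQ⟩ | ⟨a', b', ha', hb', hQ⟩)
    · refine Or.inl ⟨a * a', b * b', by simp [ha, ha'], by simp [hb, hb'], ?_⟩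
      show (P : Matrix (Fin 2) (Fin 2) ℂ) * (Q : Matrix (Fin 2) (Fin 2) ℂ) = _
      rw [hP, hQ]; simp [Matrix.mul_fin_two]
    · refine Or.inr ⟨a * a', b * b', by simp [ha, ha'], by simp [hb, hb'], ?_⟩
      show (P : Matrix (Fin 2) (Fin 2) ℂ) * (Q : Matrix (Fin 2) (Fin 2) ℂ) = _
      rw [hP, hQ]; simp [Matrix.mul_fin_two]
    · refine Or.inr ⟨a * b', b * a', by simp [ha, hb'], by simp [hb, ha'], ?_⟩
      show (P : Matrix (Fin 2) (Fin 2) ℂ) * (Q : Matrix (Fin 2) (Fin 2) ℂ) = _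
      rw [hP, hQ]; simp [Matrix.mul_fin_two]
    · refine Or.inl ⟨a * b', b * a', by simp [ha, hb'], by simp [hb, ha'], ?_⟩
      show (P : Matrix (Fin 2) (Fin 2) ℂ) * (Q : Matrix (Fin 2) (Fin 2) ℂ) = _
      rw [hP, hQ]; simp [Matrix.mul_fin_two]
  inv_mem' := by
    rintro Q (⟨a, b, ha, hb, hQ⟩ | ⟨a, b, ha, hb, hQ⟩)
    · refine Or.inl ⟨star a, star b, by simpa using ha, by simpa using hb, ?_⟩
      show star (Q : Matrix (Fin 2) (Fin 2) ℂ) = _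
      rw [hQ]; ext i j; fin_cases i <;> fin_cases j <;> simp [Matrix.star_apply]
    · refine Or.inr ⟨star b, star a, by simpa using hb, by simpa using ha, ?_⟩
      show star (Q : Matrix (Fin 2) (Fin 2) ℂ) = _
      rw [hQ]; ext i j; fin_cases i <;> fin_cases j <;> simp [Matrix.star_apply]

/-- The real projective plane, as the quotient of the 2-sphere `S²` by the antipodal
involution `x ↦ −x`. -/
abbrev RealProjectivePlane : Type :=
  Quot (fun x y : Metric.sphere (0 : EuclideanSpace ℝ (Fin 3)) 1 =>
    (x : EuclideanSpace ℝ (Fin 3)) = -(y : EuclideanSpace ℝ (Fin 3)))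


noncomputable section
namespace RP2

abbrev E3 := EuclideanSpace ℝ (Fin 3)
abbrev Sph := Metric.sphere (0 : E3) 1
abbrev U2 := Matrix.unitaryGroup (Fin 2) ℂ

def Dm : Matrix (Fin 2) (Fin 2) ℂ := !![1,0;0,-1]
def Hm (Q : Matrix (Fin 2) (Fin 2) ℂ) : Matrix (Fin 2) (Fin 2) ℂ := Q * Dm * Qᴴ

lemma unit_mul_conj {a : ℂ} (ha : ‖a‖ = 1) : a * (starRingEnd ℂ) a = 1 := by
  rw [Complex.mul_conj]
  norm_cast
  rw [Complex.normSq_eq_norm_sq, ha]; norm_num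

lemma abs_eq_one_of_conj_mul {z : ℂ} (h : (starRingEnd ℂ) z * z = 1) : ‖z‖ = 1 := by
  have hn : (Complex.normSq z : ℂ) = 1 := by rw [Complex.normSq_eq_conj_mul_self, h]
  have hn' : Complex.normSq z = 1 := by exact_mod_cast hn
  have h2 : ‖z‖ ^ 2 = 1 := by rw [← Complex.normSq_eq_norm_sq, hn']
  have h3 := norm_nonneg z
  rcases mul_eq_zero.mp (show (‖z‖ - 1) * (‖z‖ + 1) = 0 by linear_combination h2) with h | h
  · linarith
  · linarith

lemma conj_Dm_diag {a b : ℂ} (ha : ‖a‖ = 1) (hb : ‖b‖ = 1) :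
    !![a,0;0,b] * Dm * !![a,0;0,b]ᴴ = Dm := by
  ext i j
  fin_cases i <;> fin_cases j <;>
    simp [Dm, Matrix.mul_apply, Fin.sum_univ_two, conjTranspose_apply,
      unit_mul_conj ha, unit_mul_conj hb]

lemma conj_Dm_anti {a b : ℂ} (ha : ‖a‖ = 1) (hb : ‖b‖ = 1) :
    !![0,a;b,0] * Dm * !![0,a;b,0]ᴴ = -Dm := by
  ext i j
  fin_cases i <;> fin_cases j <;>
    simp [Dm, Matrix.mul_apply, Fin.sum_univ_two, conjTranspose_apply,
      unit_mul_conj ha, unit_mul_conj hb]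

lemma Hm_mul_diag {A p : Matrix (Fin 2) (Fin 2) ℂ} (hD : p * Dm * pᴴ = Dm) :
    Hm (A * p) = Hm A := by
  rw [Hm, Hm, conjTranspose_mul]
  calc A * p * Dm * (pᴴ * Aᴴ) = A * (p * Dm * pᴴ) * Aᴴ := by
        simp only [Matrix.mul_assoc]
    _ = A * Dm * Aᴴ := by rw [hD, Matrix.mul_assoc]

lemma Hm_mul_anti {A p : Matrix (Fin 2) (Fin 2) ℂ} (hD : p * Dm * pᴴ = -Dm) :
    Hm (A * p) = -Hm A := by
  rw [Hm, Hm, conjTranspose_mul]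
  calc A * p * Dm * (pᴴ * Aᴴ) = A * (p * Dm * pᴴ) * Aᴴ := by
        simp only [Matrix.mul_assoc]
    _ = -(A * Dm * Aᴴ) := by rw [hD]; simp [Matrix.mul_assoc]

lemma Dm_herm : Dmᴴ = Dm := by
  ext i j; fin_cases i <;> fin_cases j <;> simp [Dm, conjTranspose_apply]

lemma Hm_herm (Q) : (Hm Q)ᴴ = Hm Q := by
  simp [Hm, conjTranspose_mul, Dm_herm, Matrix.mul_assoc]

lemma h10 (Q) : Hm Q 1 0 = starRingEnd ℂ (Hm Q 0 1) := by
  have := congrFun (congrFun (Hm_herm Q) 1) 0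
  simpa [conjTranspose_apply] using this.symm

lemma h00_im (Q) : (Hm Q 0 0).im = 0 := by
  have := congrFun (congrFun (Hm_herm Q) 0) 0
  simp only [conjTranspose_apply] at this
  have := congrArg Complex.im this
  simp at this
  linarith

lemma Hm_trace (hQ : Q ∈ Matrix.unitaryGroup (Fin 2) ℂ) : (Hm Q).trace = 0 := by
  have h1 : Qᴴ * Q = 1 := by
    have := (Matrix.mem_unitaryGroup_iff').mp hQ
    simpa [Matrix.star_eq_conjTranspose] using this
  have : (Hm Q).trace = (Dm * (Qᴴ * Q)).trace := by
    rw [Hm, Matrix.mul_assoc, Matrix.trace_mul_comm, Matrix.mul_assoc]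
  rw [this, h1, Matrix.mul_one]
  simp [Dm, Matrix.trace_fin_two]

lemma h11 (hQ : Q ∈ Matrix.unitaryGroup (Fin 2) ℂ) : Hm Q 1 1 = - Hm Q 0 0 := by
  have ht := Hm_trace hQ
  rw [Matrix.trace_fin_two] at ht
  linear_combination ht

lemma Hm_det (hQ : Q ∈ Matrix.unitaryGroup (Fin 2) ℂ) : (Hm Q).det = -1 := by
  have h1 : Qᴴ * Q = 1 := by
    have := (Matrix.mem_unitaryGroup_iff').mp hQ
    simpa [Matrix.star_eq_conjTranspose] using this
  have hdet : Q.det * Qᴴ.det = (Qᴴ * Q).det := by rw [Matrix.det_mul]; ring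
  rw [h1, Matrix.det_one] at hdet
  have : (Hm Q).det = Q.det * (Dm.det * Qᴴ.det) := by rw [Hm, Matrix.det_mul, Matrix.det_mul]; ring
  rw [this]
  have : Dm.det = -1 := by simp [Dm, Matrix.det_fin_two_of]
  rw [this]
  linear_combination (-1 : ℂ) * hdet

lemma sq_sum (hQ : Q ∈ Matrix.unitaryGroup (Fin 2) ℂ) :
    (Hm Q 0 1).re ^ 2 + (Hm Q 0 1).im ^ 2 + (Hm Q 0 0).re ^ 2 = 1 := by
  have hd := Hm_det hQ
  rw [Matrix.det_fin_two, h11 hQ, h10 Q] at hd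
  have h0 := h00_im Q
  have := congrArg Complex.re hd
  simp [Complex.mul_re, Complex.conj_re, Complex.conj_im, h0] at this
  nlinarith [this]

def vfun (Q : Matrix (Fin 2) (Fin 2) ℂ) : Fin 3 → ℝ :=
  ![(Hm Q 0 1).re, -(Hm Q 0 1).im, (Hm Q 0 0).re]

def vE (Q : Matrix (Fin 2) (Fin 2) ℂ) : EuclideanSpace ℝ (Fin 3) :=
  (EuclideanSpace.equiv (Fin 3) ℝ).symm (vfun Q)

lemma vE_mem (hQ : Q ∈ Matrix.unitaryGroup (Fin 2) ℂ) :
    vE Q ∈ Metric.sphere (0 : EuclideanSpace ℝ (Fin 3)) 1 := by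
  rw [mem_sphere_zero_iff_norm, EuclideanSpace.norm_eq]
  have : ∀ i, ‖(vE Q) i‖ ^ 2 = (vfun Q i) ^ 2 := fun i => by
    simp [vE, Real.norm_eq_abs, sq_abs]
  rw [Fin.sum_univ_three, this, this, this]
  have h := sq_sum hQ
  have hv : vfun Q 0 ^ 2 + vfun Q 1 ^ 2 + vfun Q 2 ^ 2 = 1 := by
    simp [vfun]; linarith
  rw [hv, Real.sqrt_one]

lemma coe_inv_mul (Q Q' : U2) : ((Q⁻¹ * Q' : U2) : Matrix (Fin 2) (Fin 2) ℂ) =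
    ((Q : Matrix (Fin 2) (Fin 2) ℂ))ᴴ * (Q' : Matrix (Fin 2) (Fin 2) ℂ) := by
  rfl

lemma star_mul_self_coe (R : U2) : ((R : Matrix (Fin 2) (Fin 2) ℂ))ᴴ * (R : Matrix (Fin 2) (Fin 2) ℂ) = 1 := by
  have := (Unitary.mem_iff.mp R.2).1
  simpa [Matrix.star_eq_conjTranspose] using this

lemma mul_star_self_coe (R : U2) : (R : Matrix (Fin 2) (Fin 2) ℂ) * ((R : Matrix (Fin 2) (Fin 2) ℂ))ᴴ = 1 := by
  have := (Unitary.mem_iff.mp R.2).2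
  simpa [Matrix.star_eq_conjTranspose] using this

lemma mem_of_Hm_eq {Q Q' : U2} (h : Hm ↑Q' = Hm ↑Q) : Q⁻¹ * Q' ∈ wreathP := by
  set A : Matrix (Fin 2) (Fin 2) ℂ := ↑Q with hA
  set B : Matrix (Fin 2) (Fin 2) ℂ := ↑Q' with hB
  set R : Matrix (Fin 2) (Fin 2) ℂ := Aᴴ * B with hR
  have hA1 : Aᴴ * A = 1 := star_mul_self_coe Q
  have hB1 : Bᴴ * B = 1 := star_mul_self_coe Q'
  have key : Dm * R = R * Dm := by
    have h1 : Hm B * B = B * Dm := by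
      rw [Hm, Matrix.mul_assoc, Matrix.mul_assoc, hB1, Matrix.mul_one]
    have h2 : Aᴴ * Hm A = Dm * Aᴴ := by
      rw [Hm, ← Matrix.mul_assoc, ← Matrix.mul_assoc, hA1, Matrix.one_mul]
    calc Dm * R = (Dm * Aᴴ) * B := by rw [hR, Matrix.mul_assoc]
      _ = (Aᴴ * Hm A) * B := by rw [h2]
      _ = Aᴴ * (Hm B * B) := by rw [h, Matrix.mul_assoc]
      _ = Aᴴ * (B * Dm) := by rw [h1]
      _ = R * Dm := by rw [hR, Matrix.mul_assoc]
  have h01 : R 0 1 = 0 := by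
    have e := congrFun (congrFun key 0) 1
    simp [Dm, Matrix.mul_apply, Fin.sum_univ_two] at e
    linear_combination e / 2
  have h10 : R 1 0 = 0 := by
    have e := congrFun (congrFun key 1) 0
    simp [Dm, Matrix.mul_apply, Fin.sum_univ_two] at e
    linear_combination -e / 2
  have hRu : Rᴴ * R = 1 := by
    have := star_mul_self_coe (Q⁻¹ * Q')
    rwa [coe_inv_mul] at this
  have e00 := congrFun (congrFun hRu 0) 0
  have e11 := congrFun (congrFun hRu 1) 1
  simp [Matrix.mul_apply, Fin.sum_univ_two, conjTranspose_apply, h01, h10] at e00 e11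
  refine Or.inl ⟨R 0 0, R 1 1, abs_eq_one_of_conj_mul e00, abs_eq_one_of_conj_mul e11, ?_⟩
  rw [coe_inv_mul, ← hR]
  ext i j
  fin_cases i <;> fin_cases j <;> simp [h01, h10]

lemma mem_of_Hm_neg {Q Q' : U2} (h : Hm ↑Q' = -Hm ↑Q) : Q⁻¹ * Q' ∈ wreathP := by
  set A : Matrix (Fin 2) (Fin 2) ℂ := ↑Q with hA
  set B : Matrix (Fin 2) (Fin 2) ℂ := ↑Q' with hB
  set R : Matrix (Fin 2) (Fin 2) ℂ := Aᴴ * B with hR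
  have hA1 : Aᴴ * A = 1 := star_mul_self_coe Q
  have hB1 : Bᴴ * B = 1 := star_mul_self_coe Q'
  have key : Dm * R = -(R * Dm) := by
    have h1 : Hm B * B = B * Dm := by
      rw [Hm, Matrix.mul_assoc, Matrix.mul_assoc, hB1, Matrix.mul_one]
    have h2 : Aᴴ * Hm A = Dm * Aᴴ := by
      rw [Hm, ← Matrix.mul_assoc, ← Matrix.mul_assoc, hA1, Matrix.one_mul]
    calc Dm * R = (Dm * Aᴴ) * B := by rw [hR, Matrix.mul_assoc]
      _ = (Aᴴ * Hm A) * B := by rw [h2]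
      _ = -(Aᴴ * (Hm B * B)) := by rw [h]; simp [Matrix.mul_assoc]
      _ = -(Aᴴ * (B * Dm)) := by rw [h1]
      _ = -(R * Dm) := by rw [hR, Matrix.mul_assoc]
  have h00 : R 0 0 = 0 := by
    have e := congrFun (congrFun key 0) 0
    simp [Dm, Matrix.mul_apply, Fin.sum_univ_two] at e
    linear_combination e / 2
  have h11 : R 1 1 = 0 := by
    have e := congrFun (congrFun key 1) 1
    simp [Dm, Matrix.mul_apply, Fin.sum_univ_two] at e
    linear_combination -e / 2
  have hRu : Rᴴ * R = 1 := by
    have := star_mul_self_coe (Q⁻¹ * Q')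
    rwa [coe_inv_mul] at this
  have e00 := congrFun (congrFun hRu 0) 0
  have e11 := congrFun (congrFun hRu 1) 1
  simp [Matrix.mul_apply, Fin.sum_univ_two, conjTranspose_apply, h00, h11] at e00 e11
  refine Or.inr ⟨R 0 1, R 1 0, abs_eq_one_of_conj_mul e11, abs_eq_one_of_conj_mul e00, ?_⟩
  rw [coe_inv_mul, ← hR]
  ext i j
  fin_cases i <;> fin_cases j <;> simp [h00, h11]

lemma surj_core {u w t : ℝ} (hn : u^2 + w^2 + t^2 = 1) (ht : 0 ≤ t) :
    ∃ Q : U2, vfun ↑Q = ![u, w, t] := by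
  set z : ℂ := (u:ℂ) + (w:ℂ) * Complex.I with hzdef
  set s : ℝ := Real.sqrt (2*(1+t)) with hsdef
  have h1t : (0:ℝ) < 1 + t := by linarith
  have hs2 : s^2 = 2*(1+t) := Real.sq_sqrt (by linarith)
  have hsne : s ≠ 0 := by
    intro h; rw [h] at hs2; simp at hs2; linarith
  have hSne : ((s:ℂ)) ≠ 0 := Complex.ofReal_ne_zero.mpr hsne
  have hS2 : ((s:ℂ))^2 = 2*(1+(t:ℂ)) := by
    have := congrArg (fun x : ℝ => (x : ℂ)) hs2
    push_cast at this
    exact this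
  have hz : z * (starRingEnd ℂ) z = 1 - (t:ℂ)^2 := by
    rw [hzdef, Complex.mul_conj, Complex.normSq_add_mul_I]
    have : u^2 + w^2 = 1 - t^2 := by linarith
    rw [this]; push_cast; ring
  set A : Matrix (Fin 2) (Fin 2) ℂ :=
    !![(1+(t:ℂ))/(s:ℂ), -((starRingEnd ℂ) z)/(s:ℂ); z/(s:ℂ), (1+(t:ℂ))/(s:ℂ)] with hAdef
  have hmem : A ∈ Matrix.unitaryGroup (Fin 2) ℂ := by
    rw [Matrix.mem_unitaryGroup_iff']
    ext i j
    fin_cases i <;> fin_cases j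
    · simp [hAdef, Matrix.mul_apply, Fin.sum_univ_two, Matrix.star_eq_conjTranspose,
        conjTranspose_apply, map_div₀, Complex.conj_conj, Complex.conj_ofReal,
        Matrix.one_apply]
      field_simp
      linear_combination hz - hS2
    · simp [hAdef, Matrix.mul_apply, Fin.sum_univ_two, Matrix.star_eq_conjTranspose,
        conjTranspose_apply, map_div₀, Complex.conj_conj, Complex.conj_ofReal,
        Matrix.one_apply]
      field_simp
      ring
    · simp [hAdef, Matrix.mul_apply, Fin.sum_univ_two, Matrix.star_eq_conjTranspose,
        conjTranspose_apply, map_div₀, Complex.conj_conj, Complex.conj_ofReal,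
        Matrix.one_apply]
      field_simp
      ring
    · simp [hAdef, Matrix.mul_apply, Fin.sum_univ_two, Matrix.star_eq_conjTranspose,
        conjTranspose_apply, map_div₀, Complex.conj_conj, Complex.conj_ofReal,
        Matrix.one_apply]
      field_simp
      linear_combination hz - hS2
  have HA : Hm A = !![(t:ℂ), (starRingEnd ℂ) z; z, -(t:ℂ)] := by
    ext i j
    fin_cases i <;> fin_cases j
    · simp [Hm, Dm, hAdef, Matrix.mul_apply, Fin.sum_univ_two,
        conjTranspose_apply, map_div₀, Complex.conj_conj, Complex.conj_ofReal]
      field_simp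
      linear_combination -hz - (t:ℂ)*hS2
    · simp [Hm, Dm, hAdef, Matrix.mul_apply, Fin.sum_univ_two,
        conjTranspose_apply, map_div₀, Complex.conj_conj, Complex.conj_ofReal]
      field_simp
      linear_combination -((starRingEnd ℂ) z) * hS2
    · simp [Hm, Dm, hAdef, Matrix.mul_apply, Fin.sum_univ_two,
        conjTranspose_apply, map_div₀, Complex.conj_conj, Complex.conj_ofReal]
      field_simp
      linear_combination -z * hS2
    · simp [Hm, Dm, hAdef, Matrix.mul_apply, Fin.sum_univ_two,
        conjTranspose_apply, map_div₀, Complex.conj_conj, Complex.conj_ofReal]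
      field_simp
      linear_combination hz + (t:ℂ)*hS2
  refine ⟨⟨A, hmem⟩, ?_⟩
  funext i
  fin_cases i <;> simp [vfun, HA, hzdef]

instance U2compact : CompactSpace (Matrix.unitaryGroup (Fin 2) ℂ) := by
  have hsub : (Matrix.unitaryGroup (Fin 2) ℂ : Set (Matrix (Fin 2) (Fin 2) ℂ)) ⊆
      Set.pi Set.univ (fun _ : Fin 2 => Set.pi Set.univ fun _ : Fin 2 => Metric.closedBall (0:ℂ) 1) := by
    intro A hA i _ j _
    have h := (Matrix.mem_unitaryGroup_iff.mp hA)
    have h2 := congrFun (congrFun h i) i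
    simp only [Matrix.mul_apply, Matrix.star_apply, Fin.sum_univ_two,
      Matrix.star_eq_conjTranspose, Matrix.conjTranspose_apply, Matrix.one_apply_eq,
      Complex.star_def] at h2
    rw [Complex.mul_conj, Complex.mul_conj] at h2
    have h2' := congrArg Complex.re h2
    simp only [Complex.add_re, Complex.ofReal_re, Complex.one_re] at h2'
    have hns : Complex.normSq (A i j) ≤ 1 := by
      fin_cases j <;> simp only [Fin.zero_eta, Fin.mk_one, Fin.isValue]
      · nlinarith [Complex.normSq_nonneg (A i 1)]
      · nlinarith [Complex.normSq_nonneg (A i 0)]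
    simp only [Metric.mem_closedBall, dist_zero_right]
    have h3 : ‖A i j‖ ^ 2 ≤ 1 := by rwa [Complex.sq_norm]
    nlinarith [norm_nonneg (A i j)]
  have hcl : IsClosed (Matrix.unitaryGroup (Fin 2) ℂ : Set (Matrix (Fin 2) (Fin 2) ℂ)) := by
    have hset : (Matrix.unitaryGroup (Fin 2) ℂ : Set (Matrix (Fin 2) (Fin 2) ℂ)) =
        {A | star A * A = 1} ∩ {A | A * star A = 1} := by
      ext A
      exact Unitary.mem_iff
    rw [hset]
    apply IsClosed.inter
    · exact isClosed_singleton.preimage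
        ((continuous_id.matrix_conjTranspose).matrix_mul continuous_id)
    · exact isClosed_singleton.preimage
        (continuous_id.matrix_mul (continuous_id.matrix_conjTranspose))
  exact isCompact_iff_compactSpace.mp
    (((isCompact_univ_pi fun _ =>
      isCompact_univ_pi fun _ => isCompact_closedBall (0:ℂ) 1)).of_isClosed_subset hcl hsub)

lemma sphere_sum_sq (x : Sph) : (x:E3) 0 ^2 + (x:E3) 1 ^2 + (x:E3) 2 ^2 = 1 := by
  have h : ‖(x:E3)‖ = 1 := by
    have := x.2; rwa [mem_sphere_zero_iff_norm] at this
  rw [EuclideanSpace.norm_eq, Fin.sum_univ_three, Real.sqrt_eq_one] at h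
  simpa [Real.norm_eq_abs, sq_abs] using h

instance RP2t2 : T2Space (Quot (fun x y : Sph => (x : E3) = -(y : E3))) := by
  set r := fun x y : Sph => (x : E3) = -(y : E3) with hr
  have hco : ∀ i, Continuous fun x : Sph => (x:E3) i := fun i =>
    (EuclideanSpace.proj (𝕜 := ℝ) i).continuous.comp continuous_subtype_val
  have hwd : ∀ x y : Sph, r x y →
      (fun i j => (x:E3) i * (x:E3) j : Matrix (Fin 3) (Fin 3) ℝ) =
      (fun i j => (y:E3) i * (y:E3) j) := by
    intro x y hxy
    funext i j
    rw [hxy]; simp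
  set k : Quot r → Matrix (Fin 3) (Fin 3) ℝ :=
    Quot.lift (fun x : Sph => (fun i j => (x:E3) i * (x:E3) j : Matrix (Fin 3) (Fin 3) ℝ)) hwd with hk
  apply T2Space.of_injective_continuous (f := k)
  · -- injective
    intro p q
    induction p using Quot.ind with | _ x =>
    induction q using Quot.ind with | _ y =>
    intro h
    simp only [hk] at h
    have he : ∀ i j, (x:E3) i * (x:E3) j = (y:E3) i * (y:E3) j := by
      intro i j; exact congrFun (congrFun h i) j
    set a0 := (x:E3) 0; set a1 := (x:E3) 1; set a2 := (x:E3) 2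
    set b0 := (y:E3) 0; set b1 := (y:E3) 1; set b2 := (y:E3) 2
    have hN : a0^2 + a1^2 + a2^2 = 1 := sphere_sum_sq x
    set c := a0*b0 + a1*b1 + a2*b2 with hc
    have hM : b0^2 + b1^2 + b2^2 = 1 := sphere_sum_sq y
    have h0 : a0 = c * b0 := by
      linear_combination (-a0) * hN + a0 * (he 0 0) + a1 * (he 0 1) + a2 * (he 0 2)
    have h1 : a1 = c * b1 := by
      linear_combination (-a1) * hN + a0 * (he 0 1) + a1 * (he 1 1) + a2 * (he 1 2)
    have h2 : a2 = c * b2 := by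
      linear_combination (-a2) * hN + a0 * (he 0 2) + a1 * (he 1 2) + a2 * (he 2 2)
    have hc2 : c ^ 2 = 1 := by
      linear_combination (-(c^2)) * hM + hN - (a0 + c*b0)*h0 - (a1 + c*b1)*h1 - (a2 + c*b2)*h2
    have hcc : c = 1 ∨ c = -1 := by
      rcases mul_eq_zero.mp (show (c - 1) * (c + 1) = 0 by linear_combination hc2) with h | h
      · left; linarith
      · right; linarith
    rcases hcc with h | h
    · have : x = y := by
        apply Subtype.ext; ext i; fin_cases i
        · simpa [h] using h0
        · simpa [h] using h1
        · simpa [h] using h2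
      rw [this]
    · apply Quot.sound
      show (x:E3) = -(y:E3)
      ext i; fin_cases i
      · simpa [h] using h0
      · simpa [h] using h1
      · simpa [h] using h2
  · exact continuous_quot_lift _ (by
      apply continuous_pi; intro i; apply continuous_pi; intro j
      exact (hco i).mul (hco j))


-- reconstruction lemmas
lemma Hm_of_vfun_eq {A B : Matrix (Fin 2) (Fin 2) ℂ}
    (hA : A ∈ Matrix.unitaryGroup (Fin 2) ℂ) (hB : B ∈ Matrix.unitaryGroup (Fin 2) ℂ)
    (h : ∀ i, vfun B i = vfun A i) : Hm B = Hm A := by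
  have e0 := h 0; have e1 := h 1; have e2 := h 2
  simp [vfun] at e0 e1 e2
  have c01 : Hm B 0 1 = Hm A 0 1 := Complex.ext e0 (by linarith)
  have c00 : Hm B 0 0 = Hm A 0 0 := Complex.ext e2 (by rw [h00_im, h00_im])
  ext i j
  fin_cases i <;> fin_cases j <;> simp only [Fin.zero_eta, Fin.mk_one, Fin.isValue]
  · exact c00
  · exact c01
  · rw [h10, h10, c01]
  · rw [h11 hB, h11 hA, c00]

lemma Hm_of_vfun_neg {A B : Matrix (Fin 2) (Fin 2) ℂ}
    (hA : A ∈ Matrix.unitaryGroup (Fin 2) ℂ) (hB : B ∈ Matrix.unitaryGroup (Fin 2) ℂ)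
    (h : ∀ i, vfun B i = -vfun A i) : Hm B = -Hm A := by
  have e0 := h 0; have e1 := h 1; have e2 := h 2
  simp [vfun] at e0 e1 e2
  have c01 : Hm B 0 1 = -Hm A 0 1 := Complex.ext (by simpa using e0) (by simp only [Complex.neg_im]; linarith)
  have c00 : Hm B 0 0 = -Hm A 0 0 := Complex.ext (by simpa using e2) (by simp [h00_im])
  ext i j
  fin_cases i <;> fin_cases j <;> simp only [Fin.zero_eta, Fin.mk_one, Fin.isValue]
  · simpa using c00
  · simpa using c01
  · rw [h10]
    simp only [Matrix.neg_apply, h10]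
    rw [c01]; simp
  · rw [h11 hB]
    simp only [Matrix.neg_apply, h11 hA]
    rw [c00]

-- the maps
def vS (Q : U2) : Sph := ⟨vE ↑Q, vE_mem Q.2⟩

lemma vS_apply (Q : U2) (i : Fin 3) : ((vS Q : Sph) : E3) i = vfun (↑Q) i := rfl

def fU (Q : U2) : RealProjectivePlane := Quot.mk _ (vS Q)

lemma fU_eq_of_Hm_eq {Q Q' : U2} (h : Hm ↑Q' = Hm ↑Q) : fU Q = fU Q' := by
  have : vS Q = vS Q' := by
    apply Subtype.ext
    ext i
    show vfun (↑Q) i = vfun (↑Q') i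
    fin_cases i <;> simp [vfun, h]
  rw [fU, fU, this]

lemma fU_eq_of_Hm_neg {Q Q' : U2} (h : Hm ↑Q' = -Hm ↑Q) : fU Q = fU Q' := by
  apply Quot.sound
  show ((vS Q : Sph) : E3) = -((vS Q' : Sph) : E3)
  ext i
  show vfun (↑Q) i = -(((vS Q' : Sph) : E3) i)
  rw [vS_apply]
  fin_cases i <;> simp [vfun, h]

lemma fU_respects (Q Q' : U2) (h : Q⁻¹ * Q' ∈ wreathP) : fU Q = fU Q' := by
  have hcoe : (Q' : Matrix (Fin 2) (Fin 2) ℂ) =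
      (Q : Matrix (Fin 2) (Fin 2) ℂ) * ((Q⁻¹ * Q' : U2) : Matrix (Fin 2) (Fin 2) ℂ) := by
    have h2 : Q * (Q⁻¹ * Q') = Q' := by group
    calc (Q' : Matrix (Fin 2) (Fin 2) ℂ) = ((Q * (Q⁻¹ * Q') : U2) : Matrix (Fin 2) (Fin 2) ℂ) := by
          rw [h2]
      _ = _ := rfl
  rcases h with ⟨a, b, ha, hb, hP⟩ | ⟨a, b, ha, hb, hP⟩
  · apply fU_eq_of_Hm_eq
    rw [hcoe]
    exact Hm_mul_diag (by rw [hP]; exact conj_Dm_diag ha hb)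
  · apply fU_eq_of_Hm_neg
    rw [hcoe]
    exact Hm_mul_anti (by rw [hP]; exact conj_Dm_anti ha hb)

def Fmap : (Matrix.unitaryGroup (Fin 2) ℂ ⧸ wreathP) → RealProjectivePlane :=
  Quotient.lift fU (fun a b h => fU_respects a b ((QuotientGroup.leftRel_apply).mp h))

lemma Fmap_mk (Q : U2) : Fmap (QuotientGroup.mk Q) = fU Q := rfl

lemma vfun_continuous : Continuous fun Q : U2 => vfun (↑Q : Matrix (Fin 2) (Fin 2) ℂ) := by
  have hcoe : Continuous fun Q : U2 => (↑Q : Matrix (Fin 2) (Fin 2) ℂ) := continuous_subtype_val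
  have hH : Continuous fun Q : U2 => Hm (↑Q : Matrix (Fin 2) (Fin 2) ℂ) :=
    (hcoe.matrix_mul continuous_const).matrix_mul hcoe.matrix_conjTranspose
  apply continuous_pi
  intro i
  fin_cases i
  · exact Complex.continuous_re.comp ((hH.matrix_elem 0 1))
  · exact (Complex.continuous_im.comp ((hH.matrix_elem 0 1))).neg
  · exact Complex.continuous_re.comp ((hH.matrix_elem 0 0))

lemma fU_continuous : Continuous fU := by
  apply Continuous.comp (continuous_quot_mk)
  apply Continuous.subtype_mk
  show Continuous fun Q : U2 => vE (↑Q : Matrix (Fin 2) (Fin 2) ℂ)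
  exact (EuclideanSpace.equiv (Fin 3) ℝ).symm.continuous.comp vfun_continuous

lemma Fmap_continuous : Continuous Fmap :=
  fU_continuous.quotient_lift _

lemma eqv_cases {x y : Sph} (h : (Quot.mk (fun x y : Sph => (x : E3) = -(y : E3)) x) =
    Quot.mk _ y) : (x : E3) = (y : E3) ∨ (x : E3) = -(y : E3) := by
  have h' := Quot.eq.mp h
  clear h
  induction h' with
  | rel a b hab => exact Or.inr hab
  | refl a => exact Or.inl rfl
  | symm a b hab ih =>
      rcases ih with h1 | h1
      · exact Or.inl h1.symm
      · right; rw [h1, neg_neg]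
  | trans a b c hab hbc ih1 ih2 =>
      rcases ih1 with h1 | h1 <;> rcases ih2 with h2 | h2
      · exact Or.inl (h1.trans h2)
      · right; rw [h1, h2]
      · right; rw [h1, h2]
      · left; rw [h1, h2, neg_neg]

lemma Fmap_injective : Function.Injective Fmap := by
  intro p q
  induction p using QuotientGroup.induction_on with | _ Q =>
  induction q using QuotientGroup.induction_on with | _ Q' =>
  intro h
  rw [Fmap_mk, Fmap_mk, fU, fU] at h
  rw [QuotientGroup.eq]
  rcases eqv_cases h with h1 | h1
  · apply mem_of_Hm_eq
    apply Hm_of_vfun_eq Q.2 Q'.2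
    intro i
    have := congrFun (congrArg WithLp.ofLp h1) i
    rw [vS_apply, vS_apply] at this
    exact this.symm
  · apply mem_of_Hm_neg
    apply Hm_of_vfun_neg Q.2 Q'.2
    intro i
    have h3 := congrFun (congrArg WithLp.ofLp h1) i
    rw [vS_apply] at h3
    have h4 : (-((vS Q' : Sph) : E3)) i = -vfun (↑Q') i := by
      show -(((vS Q' : Sph) : E3) i) = _
      rw [vS_apply]
    rw [h4] at h3
    linarith [h3]

lemma Fmap_surjective : Function.Surjective Fmap := by
  intro y
  induction y using Quot.ind with | _ x =>
  have hs := sphere_sum_sq x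
  by_cases hx2 : 0 ≤ (x:E3) 2
  · obtain ⟨Q, hQ⟩ := surj_core hs hx2
    refine ⟨QuotientGroup.mk Q, ?_⟩
    rw [Fmap_mk, fU]
    have : vS Q = x := by
      apply Subtype.ext
      ext i
      rw [show ((vS Q : Sph) : E3) i = vfun (↑Q) i from rfl, hQ]
      fin_cases i <;> simp
    rw [this]
  · obtain ⟨Q, hQ⟩ := surj_core
      (u := -((x:E3) 0)) (w := -((x:E3) 1)) (t := -((x:E3) 2))
      (by nlinarith [hs]) (by linarith)
    refine ⟨QuotientGroup.mk Q, ?_⟩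
    rw [Fmap_mk, fU]
    apply Quot.sound
    show ((vS Q : Sph) : E3) = -(x : E3)
    ext i
    rw [show ((vS Q : Sph) : E3) i = vfun (↑Q) i from rfl, hQ]
    fin_cases i <;> simp

end RP2
end

open RP2

/-- **The coset space `U(2)/P` is homeomorphic to the real projective plane `ℝP²`.** -/
theorem unitaryGroup_quotient_wreath_homeo_projectivePlane :
    Nonempty ((Matrix.unitaryGroup (Fin 2) ℂ ⧸ wreathP) ≃ₜ RealProjectivePlane) := by
  have hbij : Function.Bijective Fmap := ⟨Fmap_injective, Fmap_surjective⟩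
  have hcont : Continuous (Equiv.ofBijective Fmap hbij) := Fmap_continuous
  exact ⟨Continuous.homeoOfEquivCompactToT2 hcont⟩
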